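/- The Lovász theta SDP of the graph G₆ has more than one optimal solution: there exists a primal feasible matrix X′ with ∑_{i=1}^6 X′_{ii} = √5 and X′ ≠ X*, where X* is the explicit optimal solution. (Consequently, the canonical non-contextuality inequality of G₆ does not admit self-testing, even though its quantum bound √5 strictly exceeds its non-contextual bound 2.) -/

import Mathlib

def g6Adj (i j : ℕ) : Prop :=
  (i, j) ∈ [(1, 3), (1, 4), (1, 6), (2, 4), (2, 5), (2, 6), (3, 5), (4, 6)] ∨
    (j, i) ∈ [(1, 3), (1, 4), (1, 6), (2, 4), (2, 5), (2, 6), (3, 5), (4, 6)]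

def g6PrimalFeasible (X : Matrix (Fin 7) (Fin 7) ℝ) : Prop :=
  X.PosSemidef ∧ X 0 0 = 1 ∧
    (∀ i : Fin 7, i.val ≠ 0 → X i i = X 0 i) ∧
    (∀ i j : Fin 7, i.val ≠ 0 → j.val ≠ 0 → g6Adj i.val j.val → X i j = 0)

noncomputable def g6Xstar : Matrix (Fin 7) (Fin 7) ℝ :=
  let f : ℝ := 1 / Real.sqrt 5
  let h : ℝ := 1 / (2 * Real.sqrt 5)
  let k : ℝ := (5 - Real.sqrt 5) / 10
  let r : ℝ := (5 - Real.sqrt 5) / 20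
  !![1, f, f, f, h, f, h;
     f, f, k, 0, 0, k, 0;
     f, k, f, k, 0, 0, 0;
     f, 0, k, f, r, 0, r;
     h, 0, 0, r, h, r, 0;
     f, k, 0, 0, r, f, r;
     h, 0, 0, r, 0, r, h]

open Matrix

/-! The vertices `1, …, 5` of `G₆` induce a pentagram, i.e. a 5-cycle, whose theta value is already
`√5`. Lovász's optimal solution for the 5-cycle, bordered by a zero row and column for vertex `6`,
is therefore feasible for `G₆` with objective `√5`, while `X*` gives vertex `6` the positive weight
`1/(2√5)`. -/

noncomputable def g6Xpentagon : Matrix (Fin 7) (Fin 7) ℝ :=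
  let f : ℝ := Real.sqrt 5 / 5
  let k : ℝ := (5 - Real.sqrt 5) / 10
  !![1, f, f, f, f, f, 0;
     f, f, k, 0, 0, k, 0;
     f, k, f, k, 0, 0, 0;
     f, 0, k, f, k, 0, 0;
     f, 0, 0, k, f, k, 0;
     f, k, 0, 0, k, f, 0;
     0, 0, 0, 0, 0, 0, 0]

-- Completing the square in `x0` leaves a form of rank two, split here into two squares.
theorem pentagon_form_eq_sum_sq {s : ℝ} (hs : s ^ 2 = 5) (x0 x1 x2 x3 x4 x5 : ℝ) :
    x0 ^ 2 + 2 * (s / 5) * x0 * (x1 + x2 + x3 + x4 + x5)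
      + s / 5 * (x1 ^ 2 + x2 ^ 2 + x3 ^ 2 + x4 ^ 2 + x5 ^ 2)
      + (5 - s) / 5 * (x1 * x2 + x2 * x3 + x3 * x4 + x4 * x5 + x5 * x1)
      = (x0 + s / 5 * (x1 + x2 + x3 + x4 + x5)) ^ 2
        + (s - 1) / 5 * (x1 + (s - 1) / 4 * (x2 + x5) - (s + 1) / 4 * (x3 + x4)) ^ 2
        + s / 10 * (x2 + (s - 1) / 2 * (x3 - x4) - x5) ^ 2 := by
  have hs3 : s ^ 3 = 5 * s := by rw [pow_succ, hs]
  ring_nf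
  simp only [hs, hs3]
  ring

theorem dotProduct_g6Xpentagon_mulVec (x : Fin 7 → ℝ) :
    x ⬝ᵥ g6Xpentagon *ᵥ x =
      x 0 ^ 2 + 2 * (Real.sqrt 5 / 5) * x 0 * (x 1 + x 2 + x 3 + x 4 + x 5)
        + Real.sqrt 5 / 5 * (x 1 ^ 2 + x 2 ^ 2 + x 3 ^ 2 + x 4 ^ 2 + x 5 ^ 2)
        + (5 - Real.sqrt 5) / 5 * (x 1 * x 2 + x 2 * x 3 + x 3 * x 4 + x 4 * x 5 + x 5 * x 1) := by
  simp [dotProduct, mulVec, Fin.sum_univ_seven, g6Xpentagon]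
  ring

theorem g6Xpentagon_posSemidef : g6Xpentagon.PosSemidef := by
  rw [posSemidef_iff_dotProduct_mulVec]
  refine ⟨?_, fun x => ?_⟩
  · ext i j
    fin_cases i <;> fin_cases j <;> simp [g6Xpentagon]
  have hs : Real.sqrt 5 ^ 2 = 5 := Real.sq_sqrt (by norm_num)
  have hs1 : 1 ≤ Real.sqrt 5 := Real.one_le_sqrt.mpr (by norm_num)
  have hs1' : 0 ≤ Real.sqrt 5 - 1 := sub_nonneg.mpr hs1
  rw [star_trivial, dotProduct_g6Xpentagon_mulVec, pentagon_form_eq_sum_sq hs]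
  positivity

theorem g6PrimalFeasible_g6Xpentagon : g6PrimalFeasible g6Xpentagon := by
  refine ⟨g6Xpentagon_posSemidef, by simp [g6Xpentagon], fun i hi => ?_, fun i j _ _ hij => ?_⟩
  · fin_cases i <;> simp_all [g6Xpentagon]
  · fin_cases i <;> fin_cases j <;> simp_all [g6Adj, g6Xpentagon]

theorem g6Xpentagon_objective : ∑ i : Fin 6, g6Xpentagon i.succ i.succ = Real.sqrt 5 := by
  simp [Fin.sum_univ_six, g6Xpentagon]
  ring

theorem g6Xpentagon_ne_g6Xstar : g6Xpentagon ≠ g6Xstar := by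
  intro h
  have h66 := congrFun (congrFun h 6) 6
  simp [g6Xpentagon, g6Xstar] at h66

/-- The Lovász theta SDP of `G₆` has more than one optimal solution: there is a primal
feasible `X'` with objective value `∑_{i=1}^6 X'_{ii} = √5` and `X' ≠ X*`.  (Hence the
canonical non-contextuality inequality of `G₆` does not admit self-testing.) -/
theorem g6_optimal_solution_not_unique :
    ∃ X' : Matrix (Fin 7) (Fin 7) ℝ, g6PrimalFeasible X' ∧
      (∑ i : Fin 6, X' i.succ i.succ = Real.sqrt 5) ∧ X' ≠ g6Xstar := by
  exact ⟨g6Xpentagon, g6PrimalFeasible_g6Xpentagon, g6Xpentagon_objective,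
    g6Xpentagon_ne_g6Xstar⟩
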